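/- arXiv:1811.07063 — 5 statements merged into one kernel-verified Lean document; each statement's English description precedes it below -/
import Mathlib

section
/- Let v_θ : ℂ → ℝ be the real inner product with e^{2πiθ}. A point p = ∑_k c^k ξ^{j_k} in Λ_{n,c} maximizes v_θ over Λ_{n,c} if and only if for every k, the term v_θ(c^k ξ^{j_k}) is maximal among {v_θ(c^k ξ^j) : j = 0,...,n-1}. -/
noncomputable def xi (n : ℕ) : ℂ := Complex.exp (2 * Real.pi * Complex.I / n)

noncomputable def limitSet (n : ℕ) (c : ℂ) : Set ℂ :=
  Set.range (fun j : ℕ → Fin n => ∑' k : ℕ, c ^ k * xi n ^ ((j k : ℕ)))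

noncomputable def v (θ : ℝ) (z : ℂ) : ℝ :=
  (z * Complex.exp (-(2 * Real.pi * Complex.I) * θ)).re

/-!
The functional `v θ` is continuous and `ℝ`-linear, so it commutes with the absolutely convergent
series defining a point of `Λ_{n,c}`. Maximizing `v θ` over `Λ_{n,c}` is therefore maximizing
`∑ₖ v θ (cᵏ ξ^{jₖ})` over independent choices of the digits `jₖ`, which happens exactly when every
digit is chosen optimally: changing a single digit changes the sum by a single term.
-/

theorem forall_tsum_le_tsum_iff {ι α : Type*} [DecidableEq ι] (F : ι → α → ℝ)
    (hF : ∀ b : ι → α, Summable fun i => F i (b i)) (a : ι → α) :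
    (∀ b : ι → α, ∑' i, F i (b i) ≤ ∑' i, F i (a i)) ↔ ∀ i x, F i x ≤ F i (a i) := by
  refine ⟨fun h i x => ?_, fun h b => (hF b).tsum_le_tsum (fun i => h i (b i)) (hF a)⟩
  have hdiff : ∑' l, F l (Function.update a i x l) - ∑' l, F l (a l) = F i x - F i (a i) := by
    rw [← (hF _).tsum_sub (hF a), tsum_eq_single i fun l hl => by simp [hl]]
    simp
  linarith [h (Function.update a i x)]

noncomputable def vCLM (θ : ℝ) : ℂ →L[ℝ] ℝ :=
  Complex.reCLM.comp ((ContinuousLinearMap.mul ℝ ℂ).flip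
    (Complex.exp (-(2 * Real.pi * Complex.I) * θ)))

theorem v_tsum {ι : Type*} (θ : ℝ) {f : ι → ℂ} (hf : Summable f) :
    v θ (∑' i, f i) = ∑' i, v θ (f i) :=
  (vCLM θ).map_tsum hf

theorem summable_v {ι : Type*} (θ : ℝ) {f : ι → ℂ} (hf : Summable f) :
    Summable fun i => v θ (f i) :=
  (vCLM θ).summable hf

theorem norm_xi (n : ℕ) : ‖xi n‖ = 1 := by
  have h : 2 * Real.pi * Complex.I / n = ((2 * Real.pi / n : ℝ) : ℂ) * Complex.I := by
    push_cast
    ring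
  rw [xi, h, Complex.norm_exp_ofReal_mul_I]

theorem summable_pow_mul_xi_pow {n : ℕ} {c : ℂ} (hc : ‖c‖ < 1) (m : ℕ → ℕ) :
    Summable fun k => c ^ k * xi n ^ m k := by
  refine Summable.of_norm ?_
  simpa [norm_xi] using summable_geometric_of_lt_one (norm_nonneg c) hc

theorem extreme_iff_termwise_max_general (n : ℕ) (c : ℂ)
    (hc1 : ‖c‖ < 1) (θ : ℝ) (j : ℕ → Fin n) :
    (∀ w ∈ limitSet n c, v θ w ≤ v θ (∑' k : ℕ, c ^ k * xi n ^ ((j k : ℕ)))) ↔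
      ∀ k : ℕ, ∀ j' : Fin n, v θ (c ^ k * xi n ^ ((j' : ℕ))) ≤ v θ (c ^ k * xi n ^ ((j k : ℕ))) := by
  have hsum (i : ℕ → Fin n) := summable_pow_mul_xi_pow (n := n) hc1 fun k => i k
  simp only [limitSet, Set.forall_mem_range, v_tsum θ (hsum _)]
  exact forall_tsum_le_tsum_iff (fun k (i : Fin n) => v θ (c ^ k * xi n ^ (i : ℕ)))
    (fun i => summable_v θ (hsum i)) j

theorem extreme_iff_termwise_max (n : ℕ) (hn : 2 ≤ n) (c : ℂ)
    (hc0 : 0 < ‖c‖) (hc1 : ‖c‖ < 1) (θ : ℝ) (j : ℕ → Fin n) :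
    (∀ w ∈ limitSet n c, v θ w ≤ v θ (∑' k : ℕ, c ^ k * xi n ^ ((j k : ℕ)))) ↔
      ∀ k : ℕ, ∀ j' : Fin n, v θ (c ^ k * xi n ^ ((j' : ℕ))) ≤ v θ (c ^ k * xi n ^ ((j k : ℕ))) :=
  extreme_iff_termwise_max_general n c hc1 θ j
end

section
/- If φ is irrational, then for every θ of the form θ = ℓφ (mod 1) with ℓ ∈ ℤ, there is exactly one point of Λ_{n,c} maximizing v_θ; consequently the set of angles θ with a unique extreme point is dense in [0,1]. -/
/-!
Writing `c = r e^{2πiφ}`, we have `v_θ(c z + ξ^j) = r v_{θ-φ}(z) + cos(2π(j/n - θ))`. Every point of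
`Λ` is of the form `c z + ξ^j` with `z ∈ Λ`, so a maximizer of `v_θ` on `Λ` must be `c z + ξ^j` with
`z` maximizing `v_{θ-φ}` and `j` maximizing the cosine term. When `θ = 0` or `θ` is irrational that
`j` is unique, hence the set of maximizers at `θ` lies in the image of the set of maximizers at
`θ - φ` under one contraction of ratio `r`. Along `θ = ℓφ, (ℓ-1)φ, (ℓ-2)φ, …` every angle is `0`
or irrational, so the maximizers at `ℓφ` form a set of diameter at most `r^k diam Λ` for every
`k`: a single point. Since `v_θ` has period `1` in `θ`, all of `ℤφ + ℤ`, a dense subgroup of `ℝ`,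
has a unique maximizer.
-/

section

open Complex

lemma v_xi_pow {n : ℕ} (hn : n ≠ 0) (θ : ℝ) (j : ℕ) :
    v θ (xi n ^ j) = Real.cos (2 * Real.pi * ((j : ℝ) / n - θ)) := by
  have : xi n ^ j * exp (-(2 * Real.pi * I) * θ)
      = exp (((2 * Real.pi * ((j : ℝ) / n - θ) : ℝ) : ℂ) * I) := by
    rw [xi, ← exp_nat_mul, ← exp_add]
    congr 1
    push_cast
    field_simp
    ring
  rw [v, this, exp_ofReal_mul_I_re]

lemma v_add_intCast (θ : ℝ) (m : ℤ) (z : ℂ) : v (θ + m) z = v θ z := by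
  have : exp (-(2 * Real.pi * I) * m) = 1 := by
    rw [← exp_int_mul_two_pi_mul_I (-m)]
    push_cast
    ring_nf
  simp only [v, ofReal_add, ofReal_intCast, mul_add, exp_add, this, mul_one]

lemma v_mul_add {r φ : ℝ} {c : ℂ} (hc : c = r * exp (2 * Real.pi * I * φ)) (θ : ℝ) (z w : ℂ) :
    v θ (c * z + w) = r * v (θ - φ) z + v θ w := by
  have hexp : exp (2 * Real.pi * I * φ) * exp (-(2 * Real.pi * I) * θ)
      = exp (-(2 * Real.pi * I) * ((θ - φ : ℝ) : ℂ)) := by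
    rw [← exp_add]
    push_cast
    ring_nf
  have : (c * z + w) * exp (-(2 * Real.pi * I) * θ)
      = r * (z * exp (-(2 * Real.pi * I) * ((θ - φ : ℝ) : ℂ)))
        + w * exp (-(2 * Real.pi * I) * θ) := by
    rw [hc, ← hexp]
    ring
  rw [v, this, add_re, re_ofReal_mul, v, v]

lemma norm_ofReal_mul_exp {r : ℝ} (hr : 0 ≤ r) (φ : ℝ) :
    ‖(r : ℂ) * exp (2 * Real.pi * I * φ)‖ = r := by
  rw [norm_mul, norm_real, show 2 * Real.pi * I * φ = ((2 * Real.pi * φ : ℝ) : ℂ) * I by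
    push_cast; ring, norm_exp_ofReal_mul_I, mul_one, Real.norm_of_nonneg hr]

end

lemma continuous_v (θ : ℝ) : Continuous (v θ) := by
  unfold v
  fun_prop

lemma Fin.eq_of_sub_div_eq_intCast {n : ℕ} {i j : Fin n} {k : ℤ} (h : ((i : ℝ) - j) / n = k) :
    i = j := by
  have hn : (n : ℝ) ≠ 0 := by exact_mod_cast (Fin.pos i).ne'
  have hdiff : ((i : ℤ) - j : ℤ) = k * n := by
    rw [div_eq_iff hn] at h
    exact_mod_cast h
  have hzero := Int.eq_zero_of_abs_lt_dvd (m := n) ⟨k, by rw [hdiff, mul_comm]⟩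
    (abs_sub_lt_iff.2 ⟨by omega, by omega⟩)
  exact Fin.ext (by omega)

lemma eq_zero_of_isMax_v_zero_xi_pow {n : ℕ} [NeZero n] {j : Fin n}
    (hj : ∀ i : Fin n, v 0 (xi n ^ (i : ℕ)) ≤ v 0 (xi n ^ (j : ℕ))) : j = 0 := by
  have hone : v 0 (xi n ^ (j : ℕ)) = 1 := by
    have h0 := hj 0
    rw [v_xi_pow (NeZero.ne n), v_xi_pow (NeZero.ne n)] at h0
    rw [v_xi_pow (NeZero.ne n)]
    exact le_antisymm (Real.cos_le_one _) (by simpa using h0)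
  rw [v_xi_pow (NeZero.ne n), Real.cos_eq_one_iff] at hone
  obtain ⟨k, hk⟩ := hone
  refine Fin.eq_of_sub_div_eq_intCast (k := k) ?_
  have := Real.pi_pos
  simp only [Fin.val_zero, CharP.cast_eq_zero, sub_zero] at hk ⊢
  nlinarith [hk]

lemma v_xi_pow_injective {n : ℕ} {θ : ℝ} (hθ : Irrational θ) :
    Function.Injective (fun j : Fin n => v θ (xi n ^ (j : ℕ))) := by
  intro i j hij
  have hn : n ≠ 0 := (Fin.pos i).ne'
  simp only [v_xi_pow hn] at hij
  have hπ : 2 * Real.pi ≠ 0 := by positivity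
  obtain ⟨k, hk | hk⟩ := Real.cos_eq_cos_iff.1 hij
  · refine (Fin.eq_of_sub_div_eq_intCast (k := k) (mul_left_cancel₀ hπ ?_)).symm
    rw [sub_div]
    linarith
  · have h2θ : 2 * θ = ((i : ℝ) + j) / n - k := mul_left_cancel₀ hπ (by rw [add_div]; linarith)
    exact absurd ⟨(((i : ℚ) + j) / n - k) / 2, by push_cast; linarith⟩ hθ

lemma existsUnique_isMax_v_xi_pow {n : ℕ} [NeZero n] {θ : ℝ} (hθ : θ = 0 ∨ Irrational θ) :
    ∃! j : Fin n, ∀ i : Fin n, v θ (xi n ^ (i : ℕ)) ≤ v θ (xi n ^ (j : ℕ)) := by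
  rcases hθ with rfl | hθ
  · refine ⟨0, fun i => ?_, fun j hj => eq_zero_of_isMax_v_zero_xi_pow hj⟩
    rw [v_xi_pow (NeZero.ne n), v_xi_pow (NeZero.ne n)]
    simpa using Real.cos_le_one _
  · obtain ⟨j, hj⟩ := Finite.exists_max fun j : Fin n => v θ (xi n ^ (j : ℕ))
    exact ⟨j, hj, fun i hi => v_xi_pow_injective hθ (le_antisymm (hj i) (hi j))⟩

def argmaxSet {α β : Type*} [LE β] (f : α → β) (s : Set α) : Set α :=
  {p | p ∈ s ∧ ∀ w ∈ s, f w ≤ f p}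

lemma IsCompact.argmaxSet_nonempty {α β : Type*} [TopologicalSpace α] [TopologicalSpace β]
    [LinearOrder β] [ClosedIciTopology β] {f : α → β} {s : Set α} (hs : IsCompact s)
    (hne : s.Nonempty) (hf : ContinuousOn f s) : (argmaxSet f s).Nonempty :=
  let ⟨p, hp, hmax⟩ := hs.exists_isMaxOn hne hf
  ⟨p, hp, fun _ hw => hmax hw⟩

lemma argmaxSet_v_subset_image {ι : Type*} {r φ θ : ℝ} (hr : 0 < r) {c : ℂ}
    (hc : c = r * Complex.exp (2 * Real.pi * Complex.I * φ)) {b : ι → ℂ} {Λ : Set ℂ}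
    (hinv : Λ = ⋃ j, (fun z => c * z + b j) '' Λ) (hne : (argmaxSet (v (θ - φ)) Λ).Nonempty)
    (hb : ∃! j, ∀ i, v θ (b i) ≤ v θ (b j)) :
    ∃ j₀, argmaxSet (v θ) Λ ⊆ (fun z => c * z + b j₀) '' argmaxSet (v (θ - φ)) Λ := by
  obtain ⟨j₀, hj₀, huniq⟩ := hb
  obtain ⟨z₀, hz₀Λ, hz₀⟩ := hne
  refine ⟨j₀, ?_⟩
  rintro p ⟨hpΛ, hp⟩
  have hmem : c * z₀ + b j₀ ∈ Λ := by
    rw [hinv]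
    exact Set.mem_iUnion.2 ⟨j₀, z₀, hz₀Λ, rfl⟩
  rw [hinv] at hpΛ
  obtain ⟨j, x, hxΛ, rfl⟩ := Set.mem_iUnion.1 hpΛ
  have hcmp := hp _ hmem
  rw [v_mul_add hc, v_mul_add hc] at hcmp
  have hx : r * v (θ - φ) x ≤ r * v (θ - φ) z₀ := mul_le_mul_of_nonneg_left (hz₀ x hxΛ) hr.le
  have hxeq : v (θ - φ) x = v (θ - φ) z₀ :=
    le_antisymm (hz₀ x hxΛ) (le_of_mul_le_mul_left (by linarith [hj₀ j]) hr)
  obtain rfl : j = j₀ := huniq j fun i => (hj₀ i).trans (by linarith)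
  exact ⟨x, ⟨hxΛ, fun w hw => hxeq ▸ hz₀ w hw⟩, rfl⟩

lemma intCast_mul_eq_zero_or_irrational {φ : ℝ} (hφ : Irrational φ) (ℓ : ℤ) :
    (ℓ : ℝ) * φ = 0 ∨ Irrational (ℓ * φ) := by
  rcases eq_or_ne ℓ 0 with rfl | hℓ
  · simp
  · exact Or.inr (hφ.intCast_mul hℓ)

lemma exists_sub_eq_pow_mul_sub_of_mem_argmaxSet {n : ℕ} [NeZero n] {r φ : ℝ} (hr : 0 < r)
    (hφ : Irrational φ) {c : ℂ} (hc : c = r * Complex.exp (2 * Real.pi * Complex.I * φ))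
    {Λ : Set ℂ} (hΛ : Λ.Nonempty) (hcomp : IsCompact Λ)
    (hinv : Λ = ⋃ j : Fin n, (fun z => c * z + xi n ^ (j : ℕ)) '' Λ) (k : ℕ) :
    ∀ ℓ : ℤ, ∀ p ∈ argmaxSet (v (ℓ * φ)) Λ, ∀ q ∈ argmaxSet (v (ℓ * φ)) Λ,
      ∃ a ∈ Λ, ∃ b ∈ Λ, p - q = c ^ k * (a - b) := by
  induction k with
  | zero => exact fun ℓ p hp q hq => ⟨p, hp.1, q, hq.1, by simp⟩
  | succ k ih =>
    intro ℓ p hp q hq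
    obtain ⟨j₀, hsub⟩ := argmaxSet_v_subset_image (b := fun j : Fin n => xi n ^ (j : ℕ)) hr hc
      hinv (hcomp.argmaxSet_nonempty hΛ (continuous_v _).continuousOn)
      (existsUnique_isMax_v_xi_pow (intCast_mul_eq_zero_or_irrational hφ ℓ))
    obtain ⟨p', hp', rfl⟩ := hsub hp
    obtain ⟨q', hq', rfl⟩ := hsub hq
    have hangle : (ℓ : ℝ) * φ - φ = ((ℓ - 1 : ℤ) : ℝ) * φ := by push_cast; ring
    rw [hangle] at hp' hq'
    obtain ⟨a, ha, b, hb, hab⟩ := ih (ℓ - 1) p' hp' q' hq'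
    exact ⟨a, ha, b, hb, by linear_combination c * hab⟩

lemma argmaxSet_v_intCast_mul_subsingleton {n : ℕ} [NeZero n] {r φ : ℝ} (hr0 : 0 < r)
    (hr1 : r < 1) (hφ : Irrational φ) {c : ℂ}
    (hc : c = r * Complex.exp (2 * Real.pi * Complex.I * φ)) {Λ : Set ℂ}
    (hΛ : Λ.Nonempty) (hcomp : IsCompact Λ)
    (hinv : Λ = ⋃ j : Fin n, (fun z => c * z + xi n ^ (j : ℕ)) '' Λ) (ℓ : ℤ) :
    (argmaxSet (v (ℓ * φ)) Λ).Subsingleton := by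
  intro p hp q hq
  obtain ⟨R, hR⟩ := hcomp.isBounded.exists_norm_le
  have hbound : ∀ k : ℕ, ‖p - q‖ ≤ r ^ k * (2 * R) := fun k => by
    obtain ⟨a, ha, b, hb, hab⟩ :=
      exists_sub_eq_pow_mul_sub_of_mem_argmaxSet hr0 hφ hc hΛ hcomp hinv k ℓ p hp q hq
    rw [hab, norm_mul, norm_pow, hc, norm_ofReal_mul_exp hr0.le]
    gcongr
    linarith [norm_sub_le a b, hR a ha, hR b hb]
  have hlim : Filter.Tendsto (fun k : ℕ => r ^ k * (2 * R)) Filter.atTop (nhds 0) := by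
    simpa using (tendsto_pow_atTop_nhds_zero_of_lt_one hr0.le hr1).mul_const (2 * R)
  exact sub_eq_zero.1 (norm_le_zero_iff.1 (ge_of_tendsto' hlim hbound))

theorem unique_extreme_dense (n : ℕ) (hn : 2 ≤ n) (r φ : ℝ) (hr0 : 0 < r) (hr1 : r < 1)
    (hφ : Irrational φ) (c : ℂ) (hc : c = r * Complex.exp (2 * Real.pi * Complex.I * φ))
    (Λ : Set ℂ) (hne : Λ.Nonempty) (hcomp : IsCompact Λ)
    (hinv : Λ = ⋃ j : Fin n, (fun z => c * z + xi n ^ (j : ℕ)) '' Λ) :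
    (∀ ℓ : ℤ, ∃! p : ℂ, p ∈ Λ ∧ ∀ w ∈ Λ, v ((ℓ : ℝ) * φ) w ≤ v ((ℓ : ℝ) * φ) p) ∧
    Dense {θ : ℝ | ∃! p : ℂ, p ∈ Λ ∧ ∀ w ∈ Λ, v θ w ≤ v θ p} := by
  have : NeZero n := ⟨by omega⟩
  have hunique : ∀ ℓ : ℤ, ∃! p : ℂ, p ∈ argmaxSet (v (ℓ * φ)) Λ := fun ℓ => by
    obtain ⟨p, hp⟩ := hcomp.argmaxSet_nonempty hne (continuous_v _).continuousOn
    exact ⟨p, hp, fun q hq =>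
      argmaxSet_v_intCast_mul_subsingleton hr0 hr1 hφ hc hne hcomp hinv ℓ hq hp⟩
  have hdense : Dense (AddSubgroup.closure {φ, 1} : Set ℝ) :=
    dense_addSubgroupClosure_pair_iff.2 (by rwa [div_one])
  refine ⟨hunique, hdense.mono fun θ hθ => ?_⟩
  obtain ⟨ℓ, m, rfl⟩ := AddSubgroup.mem_closure_pair.1 hθ
  simp only [Set.mem_ofPred_eq, zsmul_eq_mul, mul_one, v_add_intCast]
  exact hunique ℓ
end

section
/- If φ is irrational, then Λ_{n,c} is not convex. -/
open Complex Set Function ComplexConjugate Filter Topology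
open scoped Real InnerProductSpace

lemma Complex.real_inner_mul_right (u c w : ℂ) : ⟪u, c * w⟫_ℝ = ⟪conj c * u, w⟫_ℝ := by
  simp only [Complex.inner, map_mul, conj_conj]
  ring_nf

section SelfSimilar

variable {ι : Type*} {c : ℂ} {b : ι → ℂ} {Λ : Set ℂ}

noncomputable def face (K : Set ℂ) (u : ℂ) : Set ℂ := (innerSL ℝ u).toExposed K

lemma mem_face {K : Set ℂ} {u z : ℂ} : z ∈ face K u ↔ z ∈ K ∧ ∀ y ∈ K, ⟪u, y⟫_ℝ ≤ ⟪u, z⟫_ℝ :=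
  Iff.rfl

lemma Convex.face {K : Set ℂ} (hK : Convex ℝ K) (u : ℂ) : Convex ℝ (face K u) :=
  ContinuousLinearMap.toExposed.isExposed.convex hK

lemma IsCompact.face_nonempty {K : Set ℂ} (hK : IsCompact K) (hne : K.Nonempty) (u : ℂ) :
    (face K u).Nonempty := by
  obtain ⟨z, hz, hmax⟩ := hK.exists_isMaxOn hne (innerSL ℝ u).continuous.continuousOn
  exact ⟨z, hz, hmax⟩

lemma mem_face_iff_of_eq_iUnion (hΛ : Λ = ⋃ j, (fun z => c * z + b j) '' Λ) {u z : ℂ} :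
    z ∈ face Λ u ↔ ∃ j, ∃ w ∈ face Λ (conj c * u),
      IsMaxOn (fun j => ⟪u, b j⟫_ℝ) univ j ∧ c * w + b j = z := by
  have hmaps : ∀ j, ∀ w ∈ Λ, c * w + b j ∈ Λ := fun j w hw => by
    rw [hΛ]; exact mem_iUnion.2 ⟨j, w, hw, rfl⟩
  have hcover : ∀ y ∈ Λ, ∃ j, ∃ w ∈ Λ, c * w + b j = y := fun y hy => by
    rw [hΛ] at hy; simpa using hy
  have hinner : ∀ j w, ⟪u, c * w + b j⟫_ℝ = ⟪conj c * u, w⟫_ℝ + ⟪u, b j⟫_ℝ := fun j w => by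
    rw [inner_add_right, Complex.real_inner_mul_right]
  constructor
  · intro hz
    obtain ⟨hz, hmax⟩ := mem_face.1 hz
    obtain ⟨j, w, hw, rfl⟩ := hcover z hz
    refine ⟨j, w, mem_face.2 ⟨hw, fun w' hw' => ?_⟩, fun j' _ => ?_, rfl⟩
    · simpa [hinner] using hmax _ (hmaps j w' hw')
    · simpa [hinner] using hmax _ (hmaps j' w hw)
  · rintro ⟨j, w, hw, hj, rfl⟩
    obtain ⟨hw, hwmax⟩ := mem_face.1 hw
    refine mem_face.2 ⟨hmaps j w hw, ?_⟩
    rintro _ hy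
    obtain ⟨j', w', hw', rfl⟩ := hcover _ hy
    rw [hinner, hinner]
    exact add_le_add (hwmax w' hw') (hj (mem_univ j'))

lemma dist_le_pow_mul_diam_of_mem_face (hΛ : Λ = ⋃ j, (fun z => c * z + b j) '' Λ)
    (hbdd : Bornology.IsBounded Λ) (k : ℕ) {u z z' : ℂ}
    (hinj : ∀ m : ℕ, Injective fun j => ⟪conj c ^ m * u, b j⟫_ℝ)
    (hz : z ∈ face Λ u) (hz' : z' ∈ face Λ u) : dist z z' ≤ ‖c‖ ^ k * Metric.diam Λ := by
  induction k generalizing u z z' with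
  | zero => simpa using Metric.dist_le_diam_of_mem hbdd hz.1 hz'.1
  | succ k ih =>
    obtain ⟨j, w, hw, hj, rfl⟩ := (mem_face_iff_of_eq_iUnion hΛ).1 hz
    obtain ⟨j', w', hw', hj', rfl⟩ := (mem_face_iff_of_eq_iUnion hΛ).1 hz'
    obtain rfl : j = j' := hinj 0 <| by
      simpa only [pow_zero, one_mul] using le_antisymm (hj' (mem_univ j)) (hj (mem_univ j'))
    have hinj' : ∀ m : ℕ, Injective fun j => ⟪conj c ^ m * (conj c * u), b j⟫_ℝ := fun m => by
      simpa only [← mul_assoc, ← pow_succ] using hinj (m + 1)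
    calc dist (c * w + b j) (c * w' + b j) = ‖c‖ * dist w w' := by
          rw [dist_add_right, dist_eq_norm, dist_eq_norm, ← mul_sub, norm_mul]
      _ ≤ ‖c‖ * (‖c‖ ^ k * Metric.diam Λ) := by gcongr; exact ih hinj' hw hw'
      _ = ‖c‖ ^ (k + 1) * Metric.diam Λ := by ring

lemma subsingleton_face_of_injective (hΛ : Λ = ⋃ j, (fun z => c * z + b j) '' Λ)
    (hbdd : Bornology.IsBounded Λ) (hc : ‖c‖ < 1) {u : ℂ}
    (hinj : ∀ m : ℕ, Injective fun j => ⟪conj c ^ m * u, b j⟫_ℝ) : (face Λ u).Subsingleton := by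
  intro z hz z' hz'
  have hlim : Tendsto (fun k : ℕ => ‖c‖ ^ k * Metric.diam Λ) atTop (𝓝 0) := by
    simpa using (tendsto_pow_atTop_nhds_zero_of_lt_one (norm_nonneg c) hc).mul_const _
  exact dist_le_zero.1 <| ge_of_tendsto' hlim fun k =>
    dist_le_pow_mul_diam_of_mem_face hΛ hbdd k hinj hz hz'

lemma not_convex_of_isMaxOn [Finite ι] (hΛ : Λ = ⋃ j, (fun z => c * z + b j) '' Λ)
    (hcomp : IsCompact Λ) (hne : Λ.Nonempty) {u : ℂ} (hsub : (face Λ (conj c * u)).Subsingleton)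
    {i i' : ι} (hi : IsMaxOn (fun j => ⟪u, b j⟫_ℝ) univ i)
    (hi' : IsMaxOn (fun j => ⟪u, b j⟫_ℝ) univ i') (hii' : b i ≠ b i') : ¬ Convex ℝ Λ := by
  intro hconv
  obtain ⟨w, hw⟩ := hcomp.face_nonempty hne (conj c * u)
  have hfin : (face Λ u).Finite := by
    refine (finite_range fun j => c * w + b j).subset fun z hz => ?_
    obtain ⟨j, w', hw', -, rfl⟩ := (mem_face_iff_of_eq_iUnion hΛ).1 hz
    exact ⟨j, by rw [hsub hw hw']⟩
  have hsub' : (face Λ u).Subsingleton :=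
    hfin.countable.isTotallyDisconnected _ subset_rfl (hconv.face u).isPreconnected
  exact hii' (add_left_cancel (hsub' ((mem_face_iff_of_eq_iUnion hΛ).2 ⟨i, w, hw, hi, rfl⟩)
    ((mem_face_iff_of_eq_iUnion hΛ).2 ⟨i', w, hw, hi', rfl⟩)))

end SelfSimilar

lemma real_inner_exp_mul_I (θ β : ℝ) : ⟪exp (θ * I), exp (β * I)⟫_ℝ = Real.cos (β - θ) := by
  rw [Complex.inner, ← exp_conj, map_mul, conj_ofReal, conj_I, ← exp_add,
    show (β : ℂ) * I + θ * -I = ((β - θ : ℝ) : ℂ) * I by push_cast; ring, exp_ofReal_mul_I_re]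

lemma xi_pow_eq_exp (n j : ℕ) : xi n ^ j = exp ((2 * π * j / n : ℝ) * I) := by
  rw [xi, ← exp_nat_mul]
  push_cast
  ring_nf

lemma real_inner_exp_mul_I_xi_pow (n j : ℕ) (θ : ℝ) :
    ⟪exp (θ * I), xi n ^ j⟫_ℝ = Real.cos (2 * π * j / n - θ) := by
  rw [xi_pow_eq_exp, real_inner_exp_mul_I]

lemma conj_pow_mul_exp_mul_I (r α θ : ℝ) (k : ℕ) :
    conj (r * exp (α * I)) ^ k * exp (θ * I) = (r ^ k : ℝ) * exp ((θ - k * α : ℝ) * I) := by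
  rw [map_mul, ← exp_conj, conj_ofReal, map_mul, conj_ofReal, conj_I, mul_pow, ← exp_nat_mul,
    mul_assoc, ← exp_add]
  push_cast
  ring_nf

/-- Up to `2πℤ`, `cos` only identifies an angle with itself and with its negative; the second
case puts `θ` in `(π / n) ℤ`. -/
lemma injective_cos_two_pi_mul_div_sub {n : ℕ} {θ : ℝ} (hθ : ∀ k : ℤ, θ ≠ k * π / n) :
    Injective fun j : Fin n => Real.cos (2 * π * j / n - θ) := by
  intro j j' h
  have hn : (n : ℝ) ≠ 0 := by have := j.pos; positivity
  obtain ⟨k, hk | hk⟩ := Real.cos_eq_cos_iff.1 h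
  · have hkn : ((j' : ℕ) : ℤ) = j + n * k := by
      have : ((j' : ℕ) : ℝ) = j + n * k := by
        field_simp at hk
        nlinarith [Real.pi_pos]
      exact_mod_cast this
    have := congrArg (· % (n : ℤ)) hkn
    simp only [Int.add_mul_emod_self_left] at this
    rw [Int.emod_eq_of_lt (by omega) (by omega), Int.emod_eq_of_lt (by omega) (by omega)] at this
    exact Fin.ext (by omega)
  · refine absurd ?_ (hθ (j + j' - k * n))
    field_simp at hk ⊢
    push_cast
    nlinarith [Real.pi_pos]

lemma cos_two_pi_mul_div_sub_pi_div_le {n i j : ℕ} (hi : i ≤ 1) (hj : j < n) :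
    Real.cos (2 * π * j / n - π / n) ≤ Real.cos (2 * π * i / n - π / n) := by
  have hπ := Real.pi_pos
  have hn : (0 : ℝ) < n := Nat.cast_pos.2 (by omega)
  have hcos_i : Real.cos (2 * π * i / n - π / n) = Real.cos (π / n) := by
    interval_cases i
    · simp
    · ring_nf
  rw [hcos_i]
  rcases Nat.eq_zero_or_pos j with rfl | hj0
  · simp
  set x := 2 * π * j / n - π / n
  have hj1 : (1 : ℝ) ≤ j := by exact_mod_cast hj0
  have hjn : (j : ℝ) + 1 ≤ n := by exact_mod_cast hj
  have hx1 : π / n ≤ x := by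
    rw [show x = (2 * j - 1) * (π / n) by ring]
    nlinarith [div_pos hπ hn]
  have hx2 : x ≤ 2 * π - π / n := by
    rw [show x = (2 * j - 1) * (π / n) by ring, show 2 * π = 2 * n * (π / n) by field_simp]
    nlinarith [div_pos hπ hn]
  rcases le_total x π with hxπ | hxπ
  · exact Real.cos_le_cos_of_nonneg_of_le_pi (by positivity) hxπ hx1
  · rw [← Real.cos_two_pi_sub]
    exact Real.cos_le_cos_of_nonneg_of_le_pi (by positivity) (by linarith) (by linarith)

lemma Irrational.pi_div_sub_ne {φ : ℝ} (hφ : Irrational φ) {n m : ℕ} (hn : n ≠ 0) (hm : m ≠ 0)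
    (k : ℤ) : π / n - m * (2 * π * φ) ≠ k * π / n := by
  intro h
  have : ((2 * m * n : ℕ) : ℝ) * φ = ((1 - k : ℤ) : ℝ) := by
    have hn' : (n : ℝ) ≠ 0 := by exact_mod_cast hn
    field_simp at h
    push_cast
    nlinarith [Real.pi_pos]
  exact (hφ.natCast_mul (by positivity)).ne_int _ this

lemma injective_real_inner_xi_pow {n : ℕ} {ρ θ : ℝ} (hρ : ρ ≠ 0) (hθ : ∀ k : ℤ, θ ≠ k * π / n) :
    Injective fun j : Fin n => ⟪(ρ : ℂ) * exp (θ * I), xi n ^ (j : ℕ)⟫_ℝ := by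
  have h : ∀ j : Fin n,
      ⟪(ρ : ℂ) * exp (θ * I), xi n ^ (j : ℕ)⟫_ℝ = ρ * Real.cos (2 * π * j / n - θ) := fun j => by
    rw [← real_smul (x := ρ), real_inner_smul_left, real_inner_exp_mul_I_xi_pow]
  simp only [h]
  exact (mul_right_injective₀ hρ).comp (injective_cos_two_pi_mul_div_sub hθ)

theorem irrational_not_convex (n : ℕ) (hn : 2 ≤ n) (r φ : ℝ) (hr0 : 0 < r) (hr1 : r < 1)
    (hφ : Irrational φ) (c : ℂ) (hc : c = r * Complex.exp (2 * Real.pi * Complex.I * φ))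
    (Λ : Set ℂ) (hne : Λ.Nonempty) (hcomp : IsCompact Λ)
    (hinv : Λ = ⋃ j : Fin n, (fun z => c * z + xi n ^ (j : ℕ)) '' Λ) :
    ¬ Convex ℝ Λ := by
  have hn0 : n ≠ 0 := by omega
  have hc' : c = r * exp ((2 * π * φ : ℝ) * I) := by rw [hc]; push_cast; ring_nf
  have hnorm : ‖c‖ < 1 := by
    rwa [hc', norm_mul, norm_exp_ofReal_mul_I, mul_one, norm_real, Real.norm_of_nonneg hr0.le]
  have hsub : (face Λ (conj c * exp ((π / n : ℝ) * I))).Subsingleton := by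
    refine subsingleton_face_of_injective hinv hcomp.isBounded hnorm fun m => ?_
    simp only [← mul_assoc, ← pow_succ]
    simp only [hc', conj_pow_mul_exp_mul_I]
    exact injective_real_inner_xi_pow (pow_ne_zero _ hr0.ne') (hφ.pi_div_sub_ne hn0 m.succ_ne_zero)
  have hmax : ∀ i : Fin n, (i : ℕ) ≤ 1 →
      IsMaxOn (fun j : Fin n => ⟪exp ((π / n : ℝ) * I), xi n ^ (j : ℕ)⟫_ℝ) univ i :=
    fun i hi => isMaxOn_univ_iff.2 fun j => by
      simpa only [real_inner_exp_mul_I_xi_pow] using cos_two_pi_mul_div_sub_pi_div_le hi j.isLt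
  refine not_convex_of_isMaxOn hinv hcomp hne hsub (hmax ⟨0, by omega⟩ zero_le_one)
    (hmax ⟨1, hn⟩ le_rfl) ?_
  simpa [xi] using ((isPrimitiveRoot_exp n hn0).ne_one hn).symm
end

section
/- Suppose c = r e^{2πi p/q} with p/q in lowest terms, 0 < r < 1, and let b satisfy bn = lcm(n,q). If Λ_{n,c} is convex, then r ≥ 2^{-1/b}. -/
/-!
For `v ∈ ℂ` let `F(v) ⊆ Λ` be the face on which `z ↦ Re (v z)` is maximal. Self-similarity gives
`F(v) ⊆ ⋃ⱼ (c F(v c) + ξ^j)`, the union over the `j` maximising `Re (v ξ^j)`. There are at most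
two such `j`, and only one unless `n arg v` is an odd multiple of `π`. As `F(v)` is convex, hence
connected, `diam F(v) ≤ 2 r diam F(v c)`, and `diam F(v) ≤ r diam F(v c)` when the maximiser is
unique. Start from `v = e^{-iπ/n}`: there `1` and `ξ` both maximise, so `F(v)` has positive
diameter, and along `v c^i` the phase is an odd multiple of `π/n` only when `b ∣ i`. Hence
`0 < diam F(v) ≤ (2 r^b)^k diam Λ` for every `k`, which forces `2 r^b ≥ 1`.
-/

open Bornology Metric Set Real

theorem Metric.diam_le_add_of_isPreconnected_subset_union {X : Type*} [PseudoMetricSpace X]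
    {C A B : Set X} (hC : IsPreconnected C) (hA : IsClosed A) (hB : IsClosed B)
    (hAb : IsBounded A) (hBb : IsBounded B) (h : C ⊆ A ∪ B) :
    diam C ≤ diam A + diam B := by
  rcases (C ∩ A).eq_empty_or_nonempty with hCA | hCA
  · have hCB : C ⊆ B := fun x hx => (h hx).resolve_left fun hxA => hCA.subset ⟨hx, hxA⟩
    linarith [diam_mono hCB hBb, diam_nonneg (s := A)]
  rcases (C ∩ B).eq_empty_or_nonempty with hCB | hCB
  · have hCA' : C ⊆ A := fun x hx => (h hx).resolve_right fun hxB => hCB.subset ⟨hx, hxB⟩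
    linarith [diam_mono hCA' hAb, diam_nonneg (s := B)]
  obtain ⟨x, -, hAB⟩ := isPreconnected_closed_iff.1 hC A B hA hB h hCA hCB
  exact (diam_mono h (hAb.union hBb)).trans (diam_union' ⟨x, hAB⟩)

theorem lipschitzWith_mul_add (c t : ℂ) : LipschitzWith ‖c‖₊ fun z => c * z + t :=
  LipschitzWith.of_dist_le_mul fun x y => by
    rw [dist_add_right, dist_eq_norm, dist_eq_norm, ← mul_sub, norm_mul, coe_nnnorm]

noncomputable def reMul (u : ℂ) : StrongDual ℝ ℂ :=
  Complex.reCLM.comp (ContinuousLinearMap.mul ℝ ℂ u)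

@[simp]
theorem reMul_apply (u z : ℂ) : reMul u z = (u * z).re := rfl

section SelfSimilar

variable {ι : Type*} {Λ : Set ℂ} {c u : ℂ} {t : ι → ℂ}

theorem reMul_mul_add (u c w t : ℂ) : reMul u (c * w + t) = reMul (u * c) w + (u * t).re := by
  simp only [reMul_apply, mul_add, mul_assoc, Complex.add_re]

theorem toExposed_reMul_subset_iUnion (hΛ : Λ = ⋃ j, (fun z => c * z + t j) '' Λ) :
    (reMul u).toExposed Λ ⊆ ⋃ j ∈ {j | ∀ k, (u * t k).re ≤ (u * t j).re},
      (fun z => c * z + t j) '' (reMul (u * c)).toExposed Λ := by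
  have hf : ∀ j, ∀ w ∈ Λ, c * w + t j ∈ Λ := fun j w hw => by
    rw [hΛ]; exact mem_iUnion.2 ⟨j, w, hw, rfl⟩
  rintro z ⟨hzΛ, hzmax⟩
  rw [hΛ] at hzΛ
  obtain ⟨j, w, hw, rfl⟩ := mem_iUnion.1 hzΛ
  have key : ∀ k, ∀ w' ∈ Λ, reMul (u * c) w' + (u * t k).re ≤ reMul (u * c) w + (u * t j).re :=
    fun k w' hw' => by
      rw [← reMul_mul_add, ← reMul_mul_add]; exact hzmax _ (hf k w' hw')
  refine mem_biUnion (fun k => ?_) ⟨w, ⟨hw, fun w' hw' => ?_⟩, rfl⟩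
  · simpa using key k w hw
  · simpa using key j w' hw'

theorem mul_add_mem_toExposed_reMul (hΛ : Λ = ⋃ j, (fun z => c * z + t j) '' Λ) {w : ℂ} {j : ι}
    (hw : w ∈ (reMul (u * c)).toExposed Λ) (hj : ∀ k, (u * t k).re ≤ (u * t j).re) :
    c * w + t j ∈ (reMul u).toExposed Λ := by
  refine ⟨?_, fun y hy => ?_⟩
  · rw [hΛ]; exact mem_iUnion.2 ⟨j, w, hw.1, rfl⟩
  rw [hΛ] at hy
  obtain ⟨k, w', hw', rfl⟩ := mem_iUnion.1 hy
  rw [reMul_mul_add, reMul_mul_add]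
  exact add_le_add (hw.2 w' hw') (hj k)

theorem diam_toExposed_reMul_le_mul (hΛ : Λ = ⋃ j, (fun z => c * z + t j) '' Λ)
    (hcomp : IsCompact Λ) {j₁ : ι} (h : ∀ j, (∀ k, (u * t k).re ≤ (u * t j).re) → j = j₁) :
    diam ((reMul u).toExposed Λ) ≤ ‖c‖ * diam ((reMul (u * c)).toExposed Λ) := by
  have hF : IsCompact ((reMul (u * c)).toExposed Λ) :=
    ContinuousLinearMap.toExposed.isExposed.isCompact hcomp
  have hsub : (reMul u).toExposed Λ ⊆ (fun z => c * z + t j₁) '' (reMul (u * c)).toExposed Λ := by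
    intro z hz
    obtain ⟨j, hj, hzj⟩ := mem_iUnion₂.1 (toExposed_reMul_subset_iUnion hΛ hz)
    rwa [h j hj] at hzj
  exact (diam_mono hsub ((hF.image (lipschitzWith_mul_add c _).continuous).isBounded)).trans
    ((lipschitzWith_mul_add c _).diam_image_le _ hF.isBounded)

theorem diam_toExposed_reMul_le_two_mul (hΛ : Λ = ⋃ j, (fun z => c * z + t j) '' Λ)
    (hcomp : IsCompact Λ) (hconv : Convex ℝ Λ) {j₁ j₂ : ι}
    (h : ∀ j, (∀ k, (u * t k).re ≤ (u * t j).re) → j = j₁ ∨ j = j₂) :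
    diam ((reMul u).toExposed Λ) ≤ 2 * (‖c‖ * diam ((reMul (u * c)).toExposed Λ)) := by
  set F := (reMul (u * c)).toExposed Λ
  have hF : IsCompact F := ContinuousLinearMap.toExposed.isExposed.isCompact hcomp
  have himage : ∀ j, IsCompact ((fun z => c * z + t j) '' F) := fun j =>
    hF.image (lipschitzWith_mul_add c _).continuous
  have hdiam : ∀ j, diam ((fun z => c * z + t j) '' F) ≤ ‖c‖ * diam F := fun j =>
    (lipschitzWith_mul_add c _).diam_image_le _ hF.isBounded
  have hsub : (reMul u).toExposed Λ ⊆
      (fun z => c * z + t j₁) '' F ∪ (fun z => c * z + t j₂) '' F := by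
    intro z hz
    obtain ⟨j, hj, hzj⟩ := mem_iUnion₂.1 (toExposed_reMul_subset_iUnion hΛ hz)
    rcases h j hj with rfl | rfl
    exacts [Or.inl hzj, Or.inr hzj]
  have hconn : IsPreconnected ((reMul u).toExposed Λ) :=
    (ContinuousLinearMap.toExposed.isExposed.convex hconv).isPreconnected
  linarith [diam_le_add_of_isPreconnected_subset_union hconn (himage j₁).isClosed
    (himage j₂).isClosed (himage j₁).isBounded (himage j₂).isBounded hsub, hdiam j₁, hdiam j₂]

end SelfSimilar

section Grid

variable {n : ℕ} {φ : ℝ}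

theorem Fin.eq_of_sub_eq_int_mul {j j' : Fin n} {k : ℤ} (h : (j : ℝ) - j' = k * n) : j = j' := by
  have h' : ((j : ℕ) : ℤ) - (j' : ℕ) = n * k := by
    rw [mul_comm]; exact_mod_cast h
  exact Fin.ext (Nat.ModEq.eq_of_lt_of_lt (Nat.modEq_iff_dvd.2 ⟨k, h'⟩) j'.2 j.2).symm

theorem Fin.exists_add_eq_mul (hn : 0 < n) (l : ℤ) :
    ∃ (j : Fin n) (s : ℤ), (j : ℤ) + l = n * s := by
  have hn' : (0 : ℤ) < n := by exact_mod_cast hn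
  have hmod := Int.emod_nonneg (-l) hn'.ne'
  refine ⟨⟨((-l) % (n : ℤ)).toNat, by have := Int.emod_lt_of_pos (-l) hn'; omega⟩,
    -((-l) / (n : ℤ)), ?_⟩
  have := Int.emod_add_mul_ediv (-l) n
  simp only [Int.toNat_of_nonneg hmod]
  linarith

theorem eq_or_exists_of_cos_grid_eq {j j' : Fin n}
    (h : cos (φ + 2 * π * j / n) = cos (φ + 2 * π * j' / n)) :
    j = j' ∨ ∃ k : ℤ, n * φ = π * (k * n - j - j') := by
  have hn : (n : ℝ) ≠ 0 := Nat.cast_ne_zero.2 j.pos.ne'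
  obtain ⟨k, hk | hk⟩ := Real.cos_eq_cos_iff.1 h
  · refine Or.inl (Fin.eq_of_sub_eq_int_mul (k := -k) ?_)
    field_simp at hk
    push_cast
    nlinarith [pi_pos]
  · refine Or.inr ⟨k, ?_⟩
    field_simp at hk
    linarith

theorem eq_or_eq_or_eq_of_cos_grid_eq {j₁ j₂ j₃ : Fin n}
    (h₂ : cos (φ + 2 * π * j₁ / n) = cos (φ + 2 * π * j₂ / n))
    (h₃ : cos (φ + 2 * π * j₁ / n) = cos (φ + 2 * π * j₃ / n)) :
    j₁ = j₂ ∨ j₁ = j₃ ∨ j₂ = j₃ := by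
  rcases eq_or_exists_of_cos_grid_eq h₂ with h | ⟨k, hk⟩
  · exact Or.inl h
  rcases eq_or_exists_of_cos_grid_eq h₃ with h | ⟨k', hk'⟩
  · exact Or.inr (Or.inl h)
  have := mul_left_cancel₀ pi_ne_zero (hk.symm.trans hk')
  refine Or.inr (Or.inr (Fin.eq_of_sub_eq_int_mul (k := k - k') ?_))
  push_cast
  linarith

theorem exists_odd_of_cos_grid_isMax {j j' : Fin n} (hne : j ≠ j')
    (hmax : ∀ k : Fin n, cos (φ + 2 * π * k / n) ≤ cos (φ + 2 * π * j / n))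
    (heq : cos (φ + 2 * π * j / n) = cos (φ + 2 * π * j' / n)) :
    ∃ m : ℤ, n * φ = π * (2 * m + 1) := by
  obtain ⟨k, hk⟩ := (eq_or_exists_of_cos_grid_eq heq).resolve_left hne
  obtain ⟨l, hl⟩ | ⟨m, hm⟩ := Int.even_or_odd (k * n - j - j')
  · -- then `φ = 2πl/n`: the grid point `j₀ ≡ -l` has cosine `1`, which no other one attains
    exfalso
    have hl' : (k : ℝ) * n - j - j' = l + l := by exact_mod_cast hl
    have hn := j.pos
    obtain ⟨j₀, s, hj₀⟩ := Fin.exists_add_eq_mul hn l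
    have hj₀' : ((j₀ : ℕ) : ℝ) + l = n * s := by exact_mod_cast hj₀
    have hcos₀ : cos (φ + 2 * π * j₀ / n) = 1 := by
      rw [← cos_int_mul_two_pi s]
      congr 1
      field_simp
      linear_combination hk + π * hl' + 2 * π * hj₀'
    have hj : cos (φ + 2 * π * j / n) = 1 := le_antisymm (cos_le_one _) (hcos₀ ▸ hmax j₀)
    obtain ⟨a, ha⟩ := (cos_eq_one_iff _).1 hj
    obtain ⟨a', ha'⟩ := (cos_eq_one_iff _).1 (heq ▸ hj)
    refine hne (Fin.eq_of_sub_eq_int_mul (k := a - a') ?_)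
    field_simp at ha ha'
    push_cast
    nlinarith [pi_pos]
  · exact ⟨m, by rw [hk]; exact_mod_cast congrArg (fun x : ℤ => π * x) hm⟩

theorem exists_pair_of_cos_grid_isMax (hn : 0 < n) (φ : ℝ) :
    ∃ j₁ j₂ : Fin n,
      (∀ j : Fin n, (∀ k : Fin n, cos (φ + 2 * π * k / n) ≤ cos (φ + 2 * π * j / n)) →
        j = j₁ ∨ j = j₂) ∧ (j₁ ≠ j₂ → ∃ m : ℤ, n * φ = π * (2 * m + 1)) := by
  have : Nonempty (Fin n) := ⟨⟨0, hn⟩⟩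
  obtain ⟨j₁, hj₁⟩ := Finite.exists_max fun j : Fin n => cos (φ + 2 * π * j / n)
  by_cases h : ∃ j₂ : Fin n,
      (∀ k : Fin n, cos (φ + 2 * π * k / n) ≤ cos (φ + 2 * π * j₂ / n)) ∧ j₂ ≠ j₁
  · obtain ⟨j₂, hj₂, hne⟩ := h
    have heq := le_antisymm (hj₂ j₁) (hj₁ j₂)
    refine ⟨j₁, j₂, fun j hj => ?_, fun hne' => exists_odd_of_cos_grid_isMax hne' hj₁ heq⟩
    rcases eq_or_eq_or_eq_of_cos_grid_eq heq (le_antisymm (hj j₁) (hj₁ j)) with h | h | h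
    · exact absurd h hne.symm
    · exact Or.inl h.symm
    · exact Or.inr h.symm
  · push Not at h
    exact ⟨j₁, j₁, fun j hj => Or.inl (h j hj), fun h' => absurd rfl h'⟩

end Grid

theorem cos_le_cos_of_le_of_le_two_pi_sub {x δ : ℝ} (hδ : 0 ≤ δ) (h₁ : δ ≤ x)
    (h₂ : x ≤ 2 * π - δ) : cos x ≤ cos δ := by
  rcases le_total x π with hx | hx
  · exact cos_le_cos_of_nonneg_of_le_pi hδ hx h₁
  · rw [← cos_two_pi_sub]
    exact cos_le_cos_of_nonneg_of_le_pi hδ (by linarith) (by linarith)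

theorem cos_grid_le_cos_pi_div {n : ℕ} (k : Fin n) :
    cos (-(π / n) + 2 * π * k / n) ≤ cos (π / n) := by
  have hn : (0 : ℝ) < n := by exact_mod_cast k.pos
  rcases Nat.eq_zero_or_pos (k : ℕ) with hk | hk
  · simp [hk]
  have hk₁ : (1 : ℝ) ≤ k := by exact_mod_cast hk
  have hkn : (k : ℝ) + 1 ≤ n := by exact_mod_cast k.2
  have hδ : π / n * n = π := div_mul_cancel₀ _ hn.ne'
  rw [show -(π / n) + 2 * π * k / n = π / n * (2 * k - 1) by ring]
  apply cos_le_cos_of_le_of_le_two_pi_sub (by positivity)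
  · nlinarith [div_pos pi_pos hn]
  · nlinarith [div_pos pi_pos hn]

theorem re_exp_mul_xi_pow (n : ℕ) (φ : ℝ) (k : ℕ) :
    (Complex.exp (φ * Complex.I) * xi n ^ k).re = cos (φ + 2 * π * k / n) := by
  rw [xi, ← Complex.exp_nat_mul, ← Complex.exp_add, ← Complex.exp_ofReal_mul_I_re]
  congr 2
  push_cast
  ring

theorem toExposed_reMul_ofReal_mul {Λ : Set ℂ} {r : ℝ} (hr : 0 < r) (v : ℂ) :
    (reMul (r * v)).toExposed Λ = (reMul v).toExposed Λ := by
  ext z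
  simp only [ContinuousLinearMap.toExposed, Set.mem_ofPred_eq, reMul_apply, mul_assoc,
    Complex.re_ofReal_mul, mul_le_mul_iff_right₀ hr]

theorem exp_mul_ofReal_mul_exp (φ r ψ : ℝ) :
    Complex.exp (φ * Complex.I) * (r * Complex.exp (ψ * Complex.I)) =
      r * Complex.exp ((φ + ψ : ℝ) * Complex.I) := by
  rw [mul_left_comm, ← Complex.exp_add]
  push_cast
  ring_nf

noncomputable def faceDiam (Λ : Set ℂ) (φ : ℝ) : ℝ :=
  diam ((reMul (Complex.exp (φ * Complex.I))).toExposed Λ)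

section Attractor

variable {n : ℕ} {c : ℂ} {Λ : Set ℂ} {r ψ : ℝ}

theorem faceDiam_le_diam (hcomp : IsCompact Λ) (φ : ℝ) : faceDiam Λ φ ≤ diam Λ :=
  diam_mono ContinuousLinearMap.toExposed.isExposed.subset hcomp.isBounded

theorem faceDiam_le_two_mul (hn : 0 < n) (hr : 0 < r) (hc : c = r * Complex.exp (ψ * Complex.I))
    (hΛ : Λ = ⋃ j : Fin n, (fun z => c * z + xi n ^ (j : ℕ)) '' Λ) (hcomp : IsCompact Λ)
    (hconv : Convex ℝ Λ) (φ : ℝ) : faceDiam Λ φ ≤ 2 * (r * faceDiam Λ (φ + ψ)) := by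
  obtain ⟨j₁, j₂, hmax, -⟩ := exists_pair_of_cos_grid_isMax hn φ
  have h := diam_toExposed_reMul_le_two_mul (u := Complex.exp (φ * Complex.I)) hΛ hcomp hconv
    (j₁ := j₁) (j₂ := j₂) fun j hj => hmax j (by simpa only [re_exp_mul_xi_pow] using hj)
  rwa [hc, exp_mul_ofReal_mul_exp, toExposed_reMul_ofReal_mul hr, norm_mul,
    Complex.norm_exp_ofReal_mul_I, mul_one, Complex.norm_of_nonneg hr.le] at h

theorem faceDiam_le_mul (hn : 0 < n) (hr : 0 < r) (hc : c = r * Complex.exp (ψ * Complex.I))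
    (hΛ : Λ = ⋃ j : Fin n, (fun z => c * z + xi n ^ (j : ℕ)) '' Λ) (hcomp : IsCompact Λ)
    {φ : ℝ} (hφ : ¬∃ m : ℤ, n * φ = π * (2 * m + 1)) :
    faceDiam Λ φ ≤ r * faceDiam Λ (φ + ψ) := by
  obtain ⟨j₁, j₂, hmax, hodd⟩ := exists_pair_of_cos_grid_isMax hn φ
  obtain rfl : j₁ = j₂ := not_not.1 (mt hodd hφ)
  have h := diam_toExposed_reMul_le_mul (u := Complex.exp (φ * Complex.I)) hΛ hcomp
    (j₁ := j₁) fun j hj => (hmax j (by simpa only [re_exp_mul_xi_pow] using hj)).elim id id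
  rwa [hc, exp_mul_ofReal_mul_exp, toExposed_reMul_ofReal_mul hr, norm_mul,
    Complex.norm_exp_ofReal_mul_I, mul_one, Complex.norm_of_nonneg hr.le] at h

theorem faceDiam_pos (hn : 2 ≤ n) (hΛ : Λ = ⋃ j : Fin n, (fun z => c * z + xi n ^ (j : ℕ)) '' Λ)
    (hne : Λ.Nonempty) (hcomp : IsCompact Λ) : 0 < faceDiam Λ (-(π / n)) := by
  set u := Complex.exp ((-(π / n) : ℝ) * Complex.I)
  obtain ⟨w, hwΛ, hw⟩ := hcomp.exists_isMaxOn hne (reMul (u * c)).continuous.continuousOn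
  have hmax : ∀ j : Fin n, cos (-(π / n) + 2 * π * j / n) = cos (π / n) →
      c * w + xi n ^ (j : ℕ) ∈ (reMul u).toExposed Λ := fun j hj =>
    mul_add_mem_toExposed_reMul hΛ ⟨hwΛ, fun y hy => hw hy⟩ fun k => by
      rw [re_exp_mul_xi_pow, re_exp_mul_xi_pow, hj]; exact cos_grid_le_cos_pi_div k
  have h₀ := hmax ⟨0, by omega⟩ (by simp)
  have h₁ := hmax ⟨1, by omega⟩ (by congr 1; push_cast; ring)
  have hξ : xi n ≠ 1 := (Complex.isPrimitiveRoot_exp n (by omega)).ne_one (by omega)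
  calc 0 < dist (c * w + xi n ^ 0) (c * w + xi n ^ 1) := by
        simpa [dist_add_left, dist_comm] using hξ
    _ ≤ faceDiam Λ (-(π / n)) :=
        dist_le_diam_of_mem (ContinuousLinearMap.toExposed.isExposed.isCompact hcomp).isBounded
          h₀ h₁

end Attractor

theorem dvd_of_intCast_dvd_mul_mul {n q b i : ℕ} {p : ℤ} (hn : 0 < n) (hpq : Int.gcd p q = 1)
    (hb : b * n = Nat.lcm n q) (h : (q : ℤ) ∣ i * p * n) : b ∣ i := by
  have hcop : IsCoprime (q : ℤ) p := by
    rw [Int.isCoprime_iff_gcd_eq_one, Int.gcd_comm]; exact hpq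
  have hq : (q : ℤ) ∣ ((i * n : ℕ) : ℤ) :=
    hcop.dvd_of_dvd_mul_left (by push_cast; rwa [mul_left_comm, ← mul_assoc])
  exact Nat.dvd_of_mul_dvd_mul_right hn
    (hb ▸ Nat.lcm_dvd (dvd_mul_left n i) (Int.natCast_dvd_natCast.1 hq))

theorem dvd_of_mul_eq_pi_mul_odd {n q b i : ℕ} {p m : ℤ} (hn : 0 < n) (hq : 0 < q)
    (hpq : Int.gcd p q = 1) (hb : b * n = Nat.lcm n q)
    (h : n * (-(π / n) + i * (2 * π * p / q)) = π * (2 * m + 1)) : b ∣ i := by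
  refine dvd_of_intCast_dvd_mul_mul hn hpq hb ⟨m + 1, ?_⟩
  have hn' : (n : ℝ) ≠ 0 := by positivity
  have hq' : (q : ℝ) ≠ 0 := by positivity
  have h' : (i : ℝ) * p * n = q * (m + 1) := by
    field_simp at h
    linear_combination h / 2
  exact_mod_cast h'

section Recursion

variable {W : ℕ → ℝ} {r : ℝ} {b : ℕ}

theorem le_pow_mul_of_forall_not_dvd (h₁ : ∀ i, ¬b ∣ i → W i ≤ r * W (i + 1)) (hr : 0 ≤ r)
    (m : ℕ) : ∀ l, (∀ s < l, ¬b ∣ m + s) → W m ≤ r ^ l * W (m + l)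
  | 0, _ => by simp
  | l + 1, h => calc
      W m ≤ r ^ l * W (m + l) := le_pow_mul_of_forall_not_dvd h₁ hr m l fun s hs => h s (by omega)
      _ ≤ r ^ l * (r * W (m + l + 1)) := by gcongr; exact h₁ _ (h l (by omega))
      _ = r ^ (l + 1) * W (m + (l + 1)) := by ring_nf

theorem le_two_mul_pow_mul (h₂ : ∀ i, W i ≤ 2 * (r * W (i + 1)))
    (h₁ : ∀ i, ¬b ∣ i → W i ≤ r * W (i + 1)) (hr : 0 ≤ r) (hb : 0 < b) (k : ℕ) :
    W (k * b) ≤ 2 * r ^ b * W ((k + 1) * b) := by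
  have hblock := le_pow_mul_of_forall_not_dvd h₁ hr (k * b + 1) (b - 1) fun s hs hdvd =>
    Nat.not_dvd_of_pos_of_lt (by omega : 0 < 1 + s) (by omega)
      ((Nat.dvd_add_right (dvd_mul_left b k)).1 (by rwa [← add_assoc]))
  rw [show k * b + 1 + (b - 1) = (k + 1) * b by rw [add_mul]; omega] at hblock
  calc W (k * b) ≤ 2 * (r * W (k * b + 1)) := h₂ _
    _ ≤ 2 * (r * (r ^ (b - 1) * W ((k + 1) * b))) := by gcongr
    _ = 2 * r ^ b * W ((k + 1) * b) := by
      rw [← mul_assoc r, ← pow_succ', Nat.sub_add_cancel hb, mul_assoc]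

theorem one_le_two_mul_pow (h₂ : ∀ i, W i ≤ 2 * (r * W (i + 1)))
    (h₁ : ∀ i, ¬b ∣ i → W i ≤ r * W (i + 1)) (hr : 0 ≤ r) (hb : 0 < b) (h₀ : 0 < W 0)
    {D : ℝ} (hD : ∀ i, W i ≤ D) : 1 ≤ 2 * r ^ b := by
  have hpow : ∀ k : ℕ, W 0 ≤ (2 * r ^ b) ^ k * D := fun k => by
    have hiter : W 0 ≤ (2 * r ^ b) ^ k * W (k * b) := by
      induction k with
      | zero => simp
      | succ k ih => calc
          W 0 ≤ (2 * r ^ b) ^ k * W (k * b) := ih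
          _ ≤ (2 * r ^ b) ^ k * (2 * r ^ b * W ((k + 1) * b)) := by
            gcongr; exact le_two_mul_pow_mul h₂ h₁ hr hb k
          _ = (2 * r ^ b) ^ (k + 1) * W ((k + 1) * b) := by ring
    exact hiter.trans (by gcongr; exact hD _)
  by_contra! hlt
  have hlim := (tendsto_pow_atTop_nhds_zero_of_lt_one (by positivity) hlt).mul_const D
  rw [zero_mul] at hlim
  exact h₀.not_ge (ge_of_tendsto' hlim hpow)

end Recursion

theorem two_rpow_neg_one_div_le {r : ℝ} {b : ℕ} (hr : 0 ≤ r) (hb : 0 < b) (h : 1 ≤ 2 * r ^ b) :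
    (2 : ℝ) ^ (-(1 : ℝ) / b) ≤ r := by
  rw [← pow_le_pow_iff_left₀ (by positivity) hr hb.ne', ← rpow_natCast, ← rpow_mul zero_le_two,
    div_mul_cancel₀ _ (by positivity), rpow_neg_one]
  linarith

theorem convex_implies_modulus_bound_general (n : ℕ) (hn : 2 ≤ n) (p : ℤ) (q : ℕ) (hq : 0 < q)
    (hpq : Int.gcd p q = 1) (r : ℝ) (hr0 : 0 < r)
    (c : ℂ) (hc : c = r * Complex.exp (2 * Real.pi * Complex.I * ((p : ℝ) / q)))
    (b : ℕ) (hb : b * n = Nat.lcm n q)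
    (Λ : Set ℂ) (hne : Λ.Nonempty) (hcomp : IsCompact Λ)
    (hinv : Λ = ⋃ j : Fin n, (fun z => c * z + xi n ^ (j : ℕ)) '' Λ)
    (hconv : Convex ℝ Λ) :
    (2 : ℝ) ^ (-(1 : ℝ) / b) ≤ r := by
  have hn0 : 0 < n := by omega
  have hb0 : 0 < b :=
    Nat.pos_of_ne_zero fun h => Nat.lcm_ne_zero hn0.ne' hq.ne' (by rw [← hb, h, zero_mul])
  set ψ : ℝ := 2 * π * p / q
  have hc' : c = r * Complex.exp (ψ * Complex.I) := by
    rw [hc, show ((ψ : ℝ) : ℂ) = 2 * π * ((p : ℝ) / q) by simp only [ψ]; push_cast; ring]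
    ring_nf
  have hshift : ∀ i : ℕ, -(π / n) + ((i + 1 : ℕ) : ℝ) * ψ = -(π / n) + i * ψ + ψ := fun i => by
    push_cast; ring
  refine two_rpow_neg_one_div_le hr0.le hb0 <|
    one_le_two_mul_pow (W := fun i : ℕ => faceDiam Λ (-(π / n) + i * ψ)) (fun i => ?_)
      (fun i hi => ?_) hr0.le hb0 (by simpa using faceDiam_pos hn hinv hne hcomp)
      (fun i => faceDiam_le_diam hcomp _)
  · simp only [hshift]
    exact faceDiam_le_two_mul hn0 hr0 hc' hinv hcomp hconv _
  · simp only [hshift]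
    exact faceDiam_le_mul hn0 hr0 hc' hinv hcomp fun ⟨m, hm⟩ =>
      hi (dvd_of_mul_eq_pi_mul_odd hn0 hq hpq hb hm)

theorem convex_implies_modulus_bound (n : ℕ) (hn : 2 ≤ n) (p : ℤ) (q : ℕ) (hq : 0 < q)
    (hpq : Int.gcd p q = 1) (r : ℝ) (hr0 : 0 < r) (hr1 : r < 1)
    (c : ℂ) (hc : c = r * Complex.exp (2 * Real.pi * Complex.I * ((p : ℝ) / q)))
    (b : ℕ) (hb : b * n = Nat.lcm n q)
    (Λ : Set ℂ) (hne : Λ.Nonempty) (hcomp : IsCompact Λ)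
    (hinv : Λ = ⋃ j : Fin n, (fun z => c * z + xi n ^ (j : ℕ)) '' Λ)
    (hconv : Convex ℝ Λ) :
    (2 : ℝ) ^ (-(1 : ℝ) / b) ≤ r :=
  convex_implies_modulus_bound_general n hn p q hq hpq r hr0 c hc b hb Λ hne hcomp hinv hconv
end

section
/- For any n ≥ 2 and c ∈ ℂ with 0 < |c| < 1: if the limit set Λ_{n,c} is convex, then |c| ≥ 1/2. -/
open Set Filter Topology Finset

lemma norm_xi_pow (n k : ℕ) : ‖xi n ^ k‖ = 1 := by
  simp [xi, norm_pow, Complex.norm_exp]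

lemma sum_fin_xi_pow_eq_zero {n : ℕ} (hn : 2 ≤ n) : ∑ j : Fin n, xi n ^ (j : ℕ) = 0 := by
  rw [Fin.sum_univ_eq_sum_range (xi n ^ ·)]
  exact (Complex.isPrimitiveRoot_exp n (by omega)).geom_sum_eq_zero (by omega)

lemma Convex.mem_of_forall_add_mem {E ι : Type*} [AddCommGroup E] [Module ℝ E] [Fintype ι]
    [Nonempty ι] {s : Set E} (hs : Convex ℝ s) {a : E} {v : ι → E} (hv : ∑ i, v i = 0)
    (h : ∀ i, a + v i ∈ s) : a ∈ s := by
  have hcard : (Fintype.card ι : ℝ) ≠ 0 := Nat.cast_ne_zero.2 Fintype.card_ne_zero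
  have hmean := hs.sum_mem (t := univ) (w := fun _ => (Fintype.card ι : ℝ)⁻¹)
    (fun _ _ => by positivity) (by simp [hcard]) (fun i _ => h i)
  convert hmean using 1
  rw [← Finset.smul_sum, Finset.sum_add_distrib, hv, add_zero, sum_const, card_univ,
    ← Nat.cast_smul_eq_nsmul ℝ, smul_smul, inv_mul_cancel₀ hcard, one_smul]

lemma IsClosed.zero_mem_of_smul_mem {𝕜 E : Type*} [NormedField 𝕜] [NormedAddCommGroup E]
    [NormedSpace 𝕜 E] {s : Set E} (hs : IsClosed s) (hne : s.Nonempty) {c : 𝕜} (hc : ‖c‖ < 1)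
    (h : ∀ z ∈ s, c • z ∈ s) : (0 : E) ∈ s := by
  obtain ⟨z, hz⟩ := hne
  have hmem (k : ℕ) : c ^ k • z ∈ s := by
    induction k with
    | zero => simpa using hz
    | succ k ih => simpa [pow_succ', mul_smul] using h _ ih
  have hlim : Tendsto (fun k : ℕ => c ^ k • z) atTop (𝓝 0) := by
    simpa using (tendsto_pow_atTop_nhds_zero_of_norm_lt_one hc).smul_const z
  exact hs.mem_of_tendsto hlim (Eventually.of_forall hmem)

lemma one_half_le_norm_of_zero_mem {𝕜 E : Type*} [NormedField 𝕜] [NormedAddCommGroup E]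
    [NormedSpace 𝕜 E] {c : 𝕜} {s : Set E} (hs : IsCompact s) (h0 : (0 : E) ∈ s)
    (hcover : ∀ z ∈ s, ∃ y ∈ s, ∃ t : E, ‖t‖ = 1 ∧ z = c • y + t) : 1 / 2 ≤ ‖c‖ := by
  obtain ⟨zm, hzm, hmax⟩ := hs.exists_isMaxOn ⟨0, h0⟩ continuous_norm.continuousOn
  have hupper : ‖zm‖ ≤ ‖c‖ * ‖zm‖ + 1 := by
    obtain ⟨y, hy, t, ht, hzm_eq⟩ := hcover zm hzm
    calc ‖zm‖ ≤ ‖c‖ * ‖y‖ + ‖t‖ := hzm_eq ▸ (norm_add_le _ _).trans_eq (by rw [norm_smul])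
      _ ≤ ‖c‖ * ‖zm‖ + 1 := by rw [ht]; gcongr; exact hmax hy
  obtain ⟨y, hy, t, ht, hzero⟩ := hcover 0 h0
  have hlower : ‖c‖ * ‖y‖ = 1 := by
    rw [← norm_smul, eq_neg_of_add_eq_zero_left hzero.symm, norm_neg, ht]
  have hcM : 1 ≤ ‖c‖ * ‖zm‖ := hlower ▸ mul_le_mul_of_nonneg_left (hmax hy) (norm_nonneg c)
  have hzm_pos : 0 < ‖zm‖ := pos_of_mul_pos_right (one_pos.trans_le hcM) (norm_nonneg c)
  exact le_of_mul_le_mul_right (by linarith) hzm_pos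

theorem convex_implies_half_general (n : ℕ) (hn : 2 ≤ n) (c : ℂ)
    (hc1 : ‖c‖ < 1)
    (Λ : Set ℂ) (hne : Λ.Nonempty) (hcomp : IsCompact Λ)
    (hinv : Λ = ⋃ j : Fin n, (fun z => c * z + xi n ^ (j : ℕ)) '' Λ)
    (hconv : Convex ℝ Λ) :
    (1 : ℝ) / 2 ≤ ‖c‖ := by
  have hmaps (j : Fin n) (z : ℂ) (hz : z ∈ Λ) : c * z + xi n ^ (j : ℕ) ∈ Λ := by
    rw [hinv]
    exact mem_iUnion.2 ⟨j, z, hz, rfl⟩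
  have : Nonempty (Fin n) := ⟨⟨0, by omega⟩⟩
  have h0 : (0 : ℂ) ∈ Λ := hcomp.isClosed.zero_mem_of_smul_mem hne hc1 fun z hz =>
    hconv.mem_of_forall_add_mem (sum_fin_xi_pow_eq_zero hn) (hmaps · z hz)
  refine one_half_le_norm_of_zero_mem hcomp h0 fun z hz => ?_
  rw [hinv] at hz
  obtain ⟨j, y, hy, rfl⟩ := mem_iUnion.1 hz
  exact ⟨y, hy, _, norm_xi_pow n j, rfl⟩

theorem convex_implies_half (n : ℕ) (hn : 2 ≤ n) (c : ℂ)
    (hc0 : 0 < ‖c‖) (hc1 : ‖c‖ < 1)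
    (Λ : Set ℂ) (hne : Λ.Nonempty) (hcomp : IsCompact Λ)
    (hinv : Λ = ⋃ j : Fin n, (fun z => c * z + xi n ^ (j : ℕ)) '' Λ)
    (hconv : Convex ℝ Λ) :
    (1 : ℝ) / 2 ≤ ‖c‖ :=
  convex_implies_half_general n hn c hc1 Λ hne hcomp hinv hconv
end
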